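/- arXiv:2509.04397 — 5 statements merged into one kernel-verified Lean document; each statement's English description precedes it below -/
import Mathlib

section
/- For any scalars α, β, the bilinear form γ on the centreless BMS₃ algebra defined on basis elements by γ(L_n, L_m) = α·n(n²−1)·δ_{n+m,0}, γ(L_n, M_m) = −γ(M_m, L_n) = β·n(n²−1)·δ_{n+m,0}, and γ(M_n, M_m) = 0 is an antisymmetric Lie-algebra 2-cocycle, i.e., γ([x,y],z) + γ([y,z],x) + γ([z,x],y) = 0 for all x, y, z. -/
/-- Basis of the centreless (extended) BMS₃ algebra: `Sum.inl n` is `Lₙ`, `Sum.inr n` is `Mₙ`. -/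
abbrev BMSBasis : Type := ℤ ⊕ ℤ

/-- The underlying complex vector space, with basis `BMSBasis`. -/
abbrev BMS : Type := BMSBasis →₀ ℂ

/-- The bracket on basis elements: `[Lₙ, Lₘ] = (n-m) L_{n+m}`, `[Lₙ, Mₘ] = (n-m) M_{n+m}`,
`[Mₙ, Lₘ] = (n-m) M_{n+m}` (forced by antisymmetry) and `[Mₙ, Mₘ] = 0`. -/
noncomputable def bmsBr : BMSBasis → BMSBasis → BMS
  | Sum.inl n, Sum.inl m => ((n : ℂ) - (m : ℂ)) • Finsupp.single (Sum.inl (n + m)) (1 : ℂ)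
  | Sum.inl n, Sum.inr m => ((n : ℂ) - (m : ℂ)) • Finsupp.single (Sum.inr (n + m)) (1 : ℂ)
  | Sum.inr n, Sum.inl m => ((n : ℂ) - (m : ℂ)) • Finsupp.single (Sum.inr (n + m)) (1 : ℂ)
  | Sum.inr _, Sum.inr _ => 0

/-- The bilinear extension of the bracket to all of `BMS`. -/
noncomputable def bmsBracket (x y : BMS) : BMS :=
  x.sum fun i a => y.sum fun j b => (a * b) • bmsBr i j
/-- The cocycle on basis elements: `γ(Lₙ,Lₘ) = α n(n²-1) δ_{n+m,0}`,
`γ(Lₙ,Mₘ) = β n(n²-1) δ_{n+m,0}`, `γ(Mₙ,Lₘ) = -γ(Lₘ,Mₙ)` and `γ(Mₙ,Mₘ) = 0`. -/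
noncomputable def bmsGammaBr (α β : ℂ) : BMSBasis → BMSBasis → ℂ
  | Sum.inl n, Sum.inl m => α * (n : ℂ) * ((n : ℂ) ^ 2 - 1) * (if n + m = 0 then 1 else 0)
  | Sum.inl n, Sum.inr m => β * (n : ℂ) * ((n : ℂ) ^ 2 - 1) * (if n + m = 0 then 1 else 0)
  | Sum.inr m, Sum.inl n => -(β * (n : ℂ) * ((n : ℂ) ^ 2 - 1) * (if n + m = 0 then 1 else 0))
  | Sum.inr _, Sum.inr _ => 0

/-- The bilinear extension of the cocycle to all of `BMS`. -/
noncomputable def bmsGamma (α β : ℂ) (x y : BMS) : ℂ :=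
  x.sum fun i a => y.sum fun j b => a * b * bmsGammaBr α β i j

/-- The cocycle as a bundled bilinear map. -/
noncomputable def GmapL (α β : ℂ) : BMS →ₗ[ℂ] BMS →ₗ[ℂ] ℂ :=
  Finsupp.lsum ℂ fun i => LinearMap.toSpanSingleton ℂ _
    (Finsupp.lsum ℂ fun j => LinearMap.toSpanSingleton ℂ ℂ (bmsGammaBr α β i j))

/-- The bracket as a bundled bilinear map. -/
noncomputable def BmapL : BMS →ₗ[ℂ] BMS →ₗ[ℂ] BMS :=
  Finsupp.lsum ℂ fun i => LinearMap.toSpanSingleton ℂ _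
    (Finsupp.lsum ℂ fun j => LinearMap.toSpanSingleton ℂ BMS (bmsBr i j))

lemma gamma_eq (α β : ℂ) (x y : BMS) : bmsGamma α β x y = GmapL α β x y := by
  simp [GmapL, bmsGamma, Finsupp.lsum_apply, LinearMap.toSpanSingleton_apply,
    Finsupp.sum_apply', Finsupp.smul_sum, smul_eq_mul, mul_assoc, Finsupp.mul_sum]

lemma bracket_eq (x y : BMS) : bmsBracket x y = BmapL x y := by
  simp [BmapL, bmsBracket, Finsupp.lsum_apply, LinearMap.toSpanSingleton_apply,
    Finsupp.sum_apply', Finsupp.smul_sum, smul_smul]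

/-- The cyclic-sum trilinear map `γ([x,y],z)`. -/
noncomputable def Tmap (α β : ℂ) : BMS →ₗ[ℂ] BMS →ₗ[ℂ] BMS →ₗ[ℂ] ℂ :=
  BmapL.compr₂ (GmapL α β)

/-- The full cyclic sum `γ([x,y],z) + γ([y,z],x) + γ([z,x],y)` as a trilinear map. -/
noncomputable def Smap (α β : ℂ) : BMS →ₗ[ℂ] BMS →ₗ[ℂ] BMS →ₗ[ℂ] ℂ :=
  Tmap α β + (LinearMap.lflip.toLinearMap ∘ₗ Tmap α β).flip + LinearMap.lflip.toLinearMap ∘ₗ (Tmap α β).flip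

lemma Smap_eq_zero (α β : ℂ) : Smap α β = 0 := by
  ext i j k
  simp [Smap, Tmap, BmapL, GmapL, Finsupp.lsum_single, LinearMap.toSpanSingleton_apply]
  rcases i with n | n <;> rcases j with m | m <;> rcases k with p | p <;>
    simp only [bmsBr, bmsGammaBr, Finsupp.smul_single, smul_eq_mul, mul_one,
      Finsupp.sum_single_index, zero_mul, neg_zero, mul_zero,
      Finsupp.sum_zero_index, add_zero, zero_add] <;>
  (try split_ifs) <;>
    first
      | ring1
      | (exfalso; omega)
      | (obtain rfl : p = -n - m := by omega
         push_cast
         ring1)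

lemma gammaBr_antisymm (α β : ℂ) (i j : BMSBasis) :
    bmsGammaBr α β i j + bmsGammaBr α β j i = 0 := by
  rcases i with n | n <;> rcases j with m | m <;>
    simp only [bmsGammaBr] <;>
  (try split_ifs) <;>
    first
      | ring1
      | (exfalso; omega)
      | (obtain rfl : m = -n := by omega
         push_cast
         ring)

/-- For any scalars `α, β`, the bilinear form `γ` with `γ(Lₙ,Lₘ) = α n(n²-1) δ_{n+m,0}`,
`γ(Lₙ,Mₘ) = -γ(Mₘ,Lₙ) = β n(n²-1) δ_{n+m,0}` and `γ(Mₙ,Mₘ) = 0` is an antisymmetric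
Lie-algebra 2-cocycle on the centreless BMS₃ algebra. -/
theorem bms_gamma_is_two_cocycle (α β : ℂ) :
    (∀ x y : BMS, bmsGamma α β x y = - bmsGamma α β y x) ∧
    (∀ x y z : BMS,
      bmsGamma α β (bmsBracket x y) z + bmsGamma α β (bmsBracket y z) x +
        bmsGamma α β (bmsBracket z x) y = 0) := by
  constructor
  · intro x y
    have h : GmapL α β + (GmapL α β).flip = 0 := by
      ext i j
      simpa [GmapL, Finsupp.lsum_single, LinearMap.toSpanSingleton_apply]
        using gammaBr_antisymm α β i j
    have := LinearMap.congr_fun (LinearMap.congr_fun h x) y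
    simp only [LinearMap.add_apply, LinearMap.flip_apply, LinearMap.zero_apply] at this
    rw [gamma_eq, gamma_eq]
    exact eq_neg_of_add_eq_zero_left this
  · intro x y z
    have h := LinearMap.congr_fun (LinearMap.congr_fun
      (LinearMap.congr_fun (Smap_eq_zero α β) x) y) z
    simp only [Smap, Tmap, LinearMap.add_apply, LinearMap.flip_apply,
      LinearMap.comp_apply, LinearMap.lflip_apply, LinearMap.compr₂_apply,
      LinearMap.zero_apply] at h
    rw [gamma_eq, gamma_eq, gamma_eq, bracket_eq, bracket_eq, bracket_eq]
    exact h
end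

section
/- The 2-cocycle γ₂ on the centreless BMS₃ algebra, defined by γ₂(L_n, M_m) = −γ₂(M_m, L_n) = (1/12)·n(n²−1)·δ_{n+m,0} and γ₂(L_n,L_m) = γ₂(M_n,M_m) = 0, is not a coboundary: there is no linear functional f on the BMS₃ algebra such that γ₂(x,y) = f([x,y]) for all x, y. -/
/-- The cocycle `γ₂` on basis elements: `γ₂(Lₙ,Mₘ) = -γ₂(Mₘ,Lₙ) = (1/12) n(n²-1) δ_{n+m,0}`
and `γ₂(Lₙ,Lₘ) = γ₂(Mₙ,Mₘ) = 0`. -/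
noncomputable def bmsGammaTwoBr : BMSBasis → BMSBasis → ℂ
  | Sum.inl _, Sum.inl _ => 0
  | Sum.inl n, Sum.inr m =>
      (1 / 12) * (n : ℂ) * ((n : ℂ) ^ 2 - 1) * (if n + m = 0 then 1 else 0)
  | Sum.inr m, Sum.inl n =>
      -((1 / 12) * (n : ℂ) * ((n : ℂ) ^ 2 - 1) * (if n + m = 0 then 1 else 0))
  | Sum.inr _, Sum.inr _ => 0

/-- The bilinear extension of `γ₂` to all of `BMS`. -/
noncomputable def bmsGammaTwo (x y : BMS) : ℂ :=
  x.sum fun i a => y.sum fun j b => a * b * bmsGammaTwoBr i j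

lemma bmsGammaTwo_single (i j : BMSBasis) :
    bmsGammaTwo (Finsupp.single i 1) (Finsupp.single j 1) = bmsGammaTwoBr i j := by
  unfold bmsGammaTwo
  rw [Finsupp.sum_single_index, Finsupp.sum_single_index] <;> simp

lemma bmsBracket_single (i j : BMSBasis) :
    bmsBracket (Finsupp.single i 1) (Finsupp.single j 1) = bmsBr i j := by
  unfold bmsBracket
  rw [Finsupp.sum_single_index, Finsupp.sum_single_index] <;> simp

/-- The 2-cocycle `γ₂` on the centreless BMS₃ algebra is not a coboundary: there is
no linear functional `f` with `γ₂(x,y) = f([x,y])` for all `x, y`. -/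
theorem bms_gamma_two_not_coboundary :
    ¬ ∃ f : BMS →ₗ[ℂ] ℂ, ∀ x y : BMS, bmsGammaTwo x y = f (bmsBracket x y) := by
  rintro ⟨f, hf⟩
  have key : ∀ n : ℤ, (1 / 12 : ℂ) * n * (n ^ 2 - 1)
      = 2 * n * f (Finsupp.single (Sum.inr 0) 1) := by
    intro n
    have h := hf (Finsupp.single (Sum.inl n) 1) (Finsupp.single (Sum.inr (-n)) 1)
    rw [bmsGammaTwo_single, bmsBracket_single] at h
    simp only [bmsGammaTwoBr, bmsBr, add_neg_cancel, if_pos rfl, if_true, mul_one] at h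
    rw [h]
    push_cast
    rw [map_smul, smul_eq_mul]
    ring
  have h2 := key 2
  have h3 := key 3
  norm_num at h2 h3
  have hc : (3:ℂ)/2 - 4 = 0 := by linear_combination 3*h2 - 2*h3
  norm_num at hc
end

section
/- For every scalar a, the linear map φ_a on the centreless BMS₃ algebra defined on basis elements by φ_a(L_n) = L_n + a·n·M_n and φ_a(M_n) = M_n is a Lie algebra automorphism, and a ↦ φ_a is a one-parameter group: φ_a ∘ φ_b = φ_{a+b} and φ_0 = id. -/
/-- `φₐ` on basis elements: `φₐ(Lₙ) = Lₙ + a n Mₙ` and `φₐ(Mₙ) = Mₙ`. -/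
noncomputable def bmsPhiBr (a : ℂ) : BMSBasis → BMS
  | Sum.inl n => Finsupp.single (Sum.inl n) 1 + (a * (n : ℂ)) • Finsupp.single (Sum.inr n) 1
  | Sum.inr n => Finsupp.single (Sum.inr n) 1

/-- The linear extension of `φₐ` to all of `BMS`. -/
noncomputable def bmsPhi (a : ℂ) (x : BMS) : BMS :=
  x.sum fun i c => c • bmsPhiBr a i

/- Auxiliary lemmas -/
noncomputable def phiL (a : ℂ) : BMS →ₗ[ℂ] BMS := Finsupp.linearCombination ℂ (bmsPhiBr a)

lemma bmsPhi_eq (a : ℂ) (x : BMS) : bmsPhi a x = phiL a x := rfl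

noncomputable def brL : BMS →ₗ[ℂ] BMS →ₗ[ℂ] BMS :=
  Finsupp.linearCombination ℂ (fun i => Finsupp.linearCombination ℂ (bmsBr i))

lemma bmsBracket_eq (x y : BMS) : bmsBracket x y = brL x y := by
  unfold bmsBracket brL
  rw [Finsupp.linearCombination_apply, LinearMap.finsupp_sum_apply]
  refine Finsupp.sum_congr fun i _ => ?_
  rw [LinearMap.smul_apply, Finsupp.linearCombination_apply, Finsupp.smul_sum]
  exact Finsupp.sum_congr fun j _ => (mul_smul _ _ _)

lemma phiL_single (a : ℂ) (i : BMSBasis) (c : ℂ) :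
    phiL a (Finsupp.single i c) = c • bmsPhiBr a i :=
  Finsupp.linearCombination_single ..

lemma brL_single (i j : BMSBasis) (c d : ℂ) :
    brL (Finsupp.single i c) (Finsupp.single j d) = (c * d) • bmsBr i j := by
  unfold brL
  rw [Finsupp.linearCombination_single, LinearMap.smul_apply, Finsupp.linearCombination_single,
    smul_smul]

lemma phiL_comp (a b : ℂ) : (phiL a).comp (phiL b) = phiL (a + b) := by
  apply Finsupp.lhom_ext
  intro i c
  simp only [LinearMap.comp_apply, phiL_single, map_smul]
  congr 1
  cases i with
  | inl n =>
    simp only [bmsPhiBr, map_add, map_smul, phiL_single, one_smul]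
    module
  | inr n =>
    simp only [bmsPhiBr, phiL_single, one_smul]

lemma phiL_zero : phiL 0 = LinearMap.id := by
  apply Finsupp.lhom_ext
  intro i c
  cases i <;>
    simp only [phiL_single, bmsPhiBr, zero_mul, zero_smul, add_zero, Finsupp.smul_single,
      smul_eq_mul, mul_one, LinearMap.id_apply]

lemma phiL_br (a : ℂ) :
    ((brL).compr₂ (phiL a)) = ((brL.comp (phiL a)).compl₂ (phiL a)) := by
  apply Finsupp.lhom_ext; intro i c
  apply Finsupp.lhom_ext; intro j d
  simp only [LinearMap.compr₂_apply, LinearMap.compl₂_apply, LinearMap.comp_apply, brL_single,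
    map_smul, phiL_single]
  cases i <;> cases j <;>
    · simp only [bmsBr, bmsPhiBr, map_add, map_smul, LinearMap.add_apply, LinearMap.smul_apply, LinearMap.map_add,
        brL_single, phiL_single, one_smul, one_mul, mul_one, smul_add, smul_zero, map_zero,
        add_zero, zero_add, Int.cast_add]
      try module


/-- For every scalar `a`, the map `φₐ` with `φₐ(Lₙ) = Lₙ + a n Mₙ`, `φₐ(Mₙ) = Mₙ` is a
Lie algebra automorphism of the centreless BMS₃ algebra (linear, bijective, bracket
preserving), and `a ↦ φₐ` is a one-parameter group: `φₐ ∘ φ_b = φ_{a+b}` and `φ₀ = id`. -/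
theorem bms_phi_one_parameter_group_of_automorphisms :
    (∀ a : ℂ, ∀ x y : BMS, bmsPhi a (x + y) = bmsPhi a x + bmsPhi a y) ∧
    (∀ a c : ℂ, ∀ x : BMS, bmsPhi a (c • x) = c • bmsPhi a x) ∧
    (∀ a : ℂ, Function.Bijective (bmsPhi a)) ∧
    (∀ a : ℂ, ∀ x y : BMS, bmsPhi a (bmsBracket x y) = bmsBracket (bmsPhi a x) (bmsPhi a y)) ∧
    (∀ a b : ℂ, ∀ x : BMS, bmsPhi a (bmsPhi b x) = bmsPhi (a + b) x) ∧
    (∀ x : BMS, bmsPhi 0 x = x) := by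
  have hcomp : ∀ a b : ℂ, ∀ x : BMS, bmsPhi a (bmsPhi b x) = bmsPhi (a + b) x := by
    intro a b x
    simp only [bmsPhi_eq]
    rw [← phiL_comp a b]; rfl
  have hzero : ∀ x : BMS, bmsPhi 0 x = x := by
    intro x; rw [bmsPhi_eq, phiL_zero]; rfl
  refine ⟨fun a x y => (phiL a).map_add x y, fun a c x => (phiL a).map_smul c x, ?_, ?_, hcomp,
    hzero⟩
  · intro a
    refine Function.bijective_iff_has_inverse.2 ⟨bmsPhi (-a), fun x => ?_, fun x => ?_⟩
    · rw [hcomp, neg_add_cancel, hzero]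
    · rw [hcomp, add_neg_cancel, hzero]
  · intro a x y
    have := LinearMap.congr_fun (LinearMap.congr_fun (phiL_br a) x) y
    simpa [bmsPhi_eq, bmsBracket_eq, LinearMap.compr₂_apply, LinearMap.compl₂_apply,
      LinearMap.comp_apply] using this
end

section
/- The complex vector fields on ℝ² (with coordinates (t,x)) given by L_n = i e^{inx}(∂_x + i n t ∂_t) and M_n = i e^{inx} ∂_t satisfy, under the Lie bracket of vector fields, the BMS₃ relations: [L_n, L_m] = (n−m) L_{n+m}, [L_n, M_m] = (n−m) M_{n+m}, and [M_n, M_m] = 0. -/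
open Complex

/-- Partial derivative in `t` (the first coordinate) of a complex-valued function on `ℝ²`. -/
noncomputable def pdt (F : ℝ × ℝ → ℂ) (p : ℝ × ℝ) : ℂ :=
  deriv (fun s : ℝ => F (s, p.2)) p.1

/-- Partial derivative in `x` (the second coordinate) of a complex-valued function on `ℝ²`. -/
noncomputable def pdx (F : ℝ × ℝ → ℂ) (p : ℝ × ℝ) : ℂ :=
  deriv (fun s : ℝ => F (p.1, s)) p.2

/-- A complex vector field on `ℝ²` is recorded by its components `(X^t, X^x)` in the
coordinate frame `(∂_t, ∂_x)`.  The Lie bracket of vector fields `[X,Y]f = X(Yf) - Y(Xf)`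
in components: `[X,Y]^k = X^t ∂_t Y^k + X^x ∂_x Y^k - Y^t ∂_t X^k - Y^x ∂_x X^k`. -/
noncomputable def vfBracket (X Y : ℝ × ℝ → ℂ × ℂ) (p : ℝ × ℝ) : ℂ × ℂ :=
  ((X p).1 * pdt (fun q => (Y q).1) p + (X p).2 * pdx (fun q => (Y q).1) p
      - (Y p).1 * pdt (fun q => (X q).1) p - (Y p).2 * pdx (fun q => (X q).1) p,
   (X p).1 * pdt (fun q => (Y q).2) p + (X p).2 * pdx (fun q => (Y q).2) p
      - (Y p).1 * pdt (fun q => (X q).2) p - (Y p).2 * pdx (fun q => (X q).2) p)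

/-- The vector field `Lₙ = i e^{inx} (∂_x + i n t ∂_t)`, recorded by its `(∂_t, ∂_x)`
components. -/
noncomputable def vfL (n : ℤ) (p : ℝ × ℝ) : ℂ × ℂ :=
  (Complex.I * Complex.exp (Complex.I * (n : ℂ) * (p.2 : ℂ)) * (Complex.I * (n : ℂ) * (p.1 : ℂ)),
   Complex.I * Complex.exp (Complex.I * (n : ℂ) * (p.2 : ℂ)))

/-- The vector field `Mₙ = i e^{inx} ∂_t`, recorded by its `(∂_t, ∂_x)` components. -/
noncomputable def vfM (n : ℤ) (p : ℝ × ℝ) : ℂ × ℂ :=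
  (Complex.I * Complex.exp (Complex.I * (n : ℂ) * (p.2 : ℂ)), 0)

lemma hasDerivAt_cexp_int (n : ℤ) (x : ℝ) :
    HasDerivAt (fun s : ℝ => Complex.exp (Complex.I * (n : ℂ) * (s : ℂ)))
      (Complex.I * (n : ℂ) * Complex.exp (Complex.I * (n : ℂ) * (x : ℂ))) x := by
  have h1 : HasDerivAt (fun s : ℝ => (s : ℂ)) 1 x := by
    simpa using (hasDerivAt_id x).ofReal_comp
  have h2 : HasDerivAt (fun s : ℝ => Complex.I * (n : ℂ) * (s : ℂ))
      (Complex.I * (n : ℂ)) x := by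
    simpa using h1.const_mul (Complex.I * (n : ℂ))
  simpa [mul_comm] using h2.cexp

lemma hasDerivAt_lin (c : ℂ) (x : ℝ) :
    HasDerivAt (fun s : ℝ => c * (s : ℂ)) c x := by
  have h1 : HasDerivAt (fun s : ℝ => (s : ℂ)) 1 x := by
    simpa using (hasDerivAt_id x).ofReal_comp
  simpa using h1.const_mul c

lemma pdt_Lt (n : ℤ) (p : ℝ × ℝ) :
    pdt (fun q => (vfL n q).1) p
      = Complex.I * Complex.exp (Complex.I * (n : ℂ) * (p.2 : ℂ)) * (Complex.I * (n : ℂ)) := by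
  unfold pdt vfL
  have := (hasDerivAt_lin (Complex.I * Complex.exp (Complex.I * (n : ℂ) * (p.2 : ℂ)) * (Complex.I * (n : ℂ))) p.1)
  have h := this.deriv
  rw [← h]
  congr 1
  funext s
  ring

lemma pdx_Lt (n : ℤ) (p : ℝ × ℝ) :
    pdx (fun q => (vfL n q).1) p
      = Complex.I * (Complex.I * (n : ℂ) * Complex.exp (Complex.I * (n : ℂ) * (p.2 : ℂ))) * (Complex.I * (n : ℂ) * (p.1 : ℂ)) := by
  unfold pdx vfL
  have h := ((hasDerivAt_cexp_int n p.2).const_mul Complex.I)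
  have h2 := (h.mul_const (Complex.I * (n : ℂ) * (p.1 : ℂ))).deriv
  rw [← h2]

lemma pdt_Lx (n : ℤ) (p : ℝ × ℝ) :
    pdt (fun q => (vfL n q).2) p = 0 := by
  unfold pdt vfL
  simp

lemma pdx_Lx (n : ℤ) (p : ℝ × ℝ) :
    pdx (fun q => (vfL n q).2) p
      = Complex.I * (Complex.I * (n : ℂ) * Complex.exp (Complex.I * (n : ℂ) * (p.2 : ℂ))) := by
  unfold pdx vfL
  exact ((hasDerivAt_cexp_int n p.2).const_mul Complex.I).deriv

lemma pdt_Mt (n : ℤ) (p : ℝ × ℝ) :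
    pdt (fun q => (vfM n q).1) p = 0 := by
  unfold pdt vfM
  simp

lemma pdx_Mt (n : ℤ) (p : ℝ × ℝ) :
    pdx (fun q => (vfM n q).1) p
      = Complex.I * (Complex.I * (n : ℂ) * Complex.exp (Complex.I * (n : ℂ) * (p.2 : ℂ))) := by
  unfold pdx vfM
  exact ((hasDerivAt_cexp_int n p.2).const_mul Complex.I).deriv

lemma pdt_Mx (n : ℤ) (p : ℝ × ℝ) :
    pdt (fun q => (vfM n q).2) p = 0 := by
  unfold pdt vfM; simp

lemma pdx_Mx (n : ℤ) (p : ℝ × ℝ) :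
    pdx (fun q => (vfM n q).2) p = 0 := by
  unfold pdx vfM; simp

lemma exp_add_int (n m : ℤ) (x : ℝ) :
    Complex.exp (Complex.I * (n : ℂ) * (x : ℂ)) * Complex.exp (Complex.I * (m : ℂ) * (x : ℂ))
      = Complex.exp (Complex.I * ((n : ℂ) + (m : ℂ)) * (x : ℂ)) := by
  rw [← Complex.exp_add]; ring_nf

lemma I_pow_three : Complex.I ^ 3 = -Complex.I := by
  have : Complex.I ^ 3 = Complex.I ^ 2 * Complex.I := by ring
  rw [this, Complex.I_sq]; ring

/-- The vector fields `Lₙ = i e^{inx}(∂_x + i n t ∂_t)` and `Mₙ = i e^{inx} ∂_t` on `ℝ²`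
satisfy, under the Lie bracket of vector fields, the BMS₃ relations
`[Lₙ,Lₘ] = (n-m) L_{n+m}`, `[Lₙ,Mₘ] = (n-m) M_{n+m}` and `[Mₙ,Mₘ] = 0`. -/
theorem vf_bms3_relations (n m : ℤ) :
    vfBracket (vfL n) (vfL m) = ((n : ℂ) - (m : ℂ)) • vfL (n + m) ∧
    vfBracket (vfL n) (vfM m) = ((n : ℂ) - (m : ℂ)) • vfM (n + m) ∧
    vfBracket (vfM n) (vfM m) = 0 := by

  refine ⟨?_, ?_, ?_⟩ <;> funext p <;> refine Prod.ext ?_ ?_ <;>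
  all_goals
    simp only [vfBracket, pdt_Lt, pdx_Lt, pdt_Lx, pdx_Lx, pdt_Mt, pdx_Mt, pdt_Mx, pdx_Mx]
    simp only [vfL, vfM, Pi.smul_apply, Prod.smul_fst, Prod.smul_snd, smul_eq_mul,
      Int.cast_add, Pi.zero_apply, Prod.fst_zero, Prod.snd_zero, mul_zero, zero_mul,
      deriv_const, add_zero, zero_add, sub_zero, zero_sub]
    try rw [← exp_add_int n m p.2]
    try ring_nf
    try simp [_root_.I_pow_three, pow_succ, Complex.I_sq, Complex.I_mul_I]
    try ring
end

section
/- Let M be a smooth manifold, v a smooth vector field on M, and q a smooth 1-form with ι_v q = 0. Suppose ι_v(dq) = f·q for a smooth function f. Then the Lie derivative of the symmetric tensor q ⊗ q along v satisfies L_v(q ⊗ q) = 2f·(q ⊗ q). Moreover, for any smooth function ω, setting v' = e^{−ω} v, the Lie derivative of e^{2ω} q ⊗ q along v' equals 2 e^{ω}(L_v ω + f)·(q ⊗ q); in particular, if L_v ω = −f then L_{v'}(e^{2ω} q ⊗ q) = 0. -/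
/-- The Lie derivative of a covariant 2-tensor field `h` along a vector field `v`,
evaluated at `p` on constant vectors `u, w`:
`(L_v h)_p(u,w) = D_p[h(·)(u,w)](v(p)) + h_p(D_p v · u, w) + h_p(u, D_p v · w)`. -/
noncomputable def lieDerivBil {E : Type} [NormedAddCommGroup E] [NormedSpace ℝ E]
    (v : E → E) (h : E → E → E → ℝ) (p : E) (u w : E) : ℝ :=
  fderiv ℝ (fun x => h x u w) p (v p) + h p (fderiv ℝ v p u) w + h p u (fderiv ℝ v p w)

/-- Main computation: if `ι_v q = 0` and `ι_v dq = f q` then `L_v (q⊗q) = 2 f (q⊗q)`. -/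
theorem lieDerivBil_key {E : Type} [NormedAddCommGroup E] [NormedSpace ℝ E]
    (v : E → E) (q : E → E →L[ℝ] ℝ) (f : E → ℝ)
    (hv : Differentiable ℝ v) (hq : Differentiable ℝ q)
    (hιq : ∀ p : E, q p (v p) = 0)
    (hιdq : ∀ (p : E) (w : E),
      fderiv ℝ (fun x => q x w) p (v p) - fderiv ℝ (fun x => q x (v p)) p w = f p * q p w)
    (p u w : E) :
    lieDerivBil v (fun x a b => q x a * q x b) p u w = 2 * f p * (q p u * q p w) := by
  have hA : ∀ (x : E) (a : E), DifferentiableAt ℝ (fun y => q y a) x := fun x a =>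
    (hq x).clm_apply (differentiableAt_const a)
  have hconst : ∀ (a : E), fderiv ℝ (fun y => q y a) p = (fderiv ℝ q p).flip a := by
    intro a
    rw [fderiv_clm_apply (hq p) (differentiableAt_const a)]
    simp
  have hcancel : ∀ a : E, q p (fderiv ℝ v p a) = - fderiv ℝ (fun x => q x (v p)) p a := by
    intro a
    have h0 : fderiv ℝ (fun x => q x (v x)) p = 0 := by
      have he : (fun x => q x (v x)) = fun _ => (0 : ℝ) := funext hιq
      rw [he]; exact fderiv_const_apply 0
    have h1 := fderiv_clm_apply (hq p) (hv p)
    rw [h0] at h1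
    have h2 := congrArg (fun L => L a) h1.symm
    simp only [ContinuousLinearMap.add_apply, ContinuousLinearMap.coe_comp', Function.comp_apply,
      ContinuousLinearMap.zero_apply, ContinuousLinearMap.flip_apply] at h2
    rw [hconst (v p)]
    simp only [ContinuousLinearMap.flip_apply]
    linarith
  unfold lieDerivBil
  rw [fderiv_fun_mul (hA p u) (hA p w)]
  simp only [ContinuousLinearMap.add_apply, ContinuousLinearMap.smul_apply, smul_eq_mul]
  rw [hcancel u, hcancel w]
  have h1 := hιdq p u
  have h2 := hιdq p w
  linear_combination (q p w) * h1 + (q p u) * h2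

/-- Let `v` be a smooth vector field and `q` a smooth 1-form with `ι_v q = 0`, and suppose
`ι_v (dq) = f q` for a smooth function `f`.  Then `L_v (q⊗q) = 2 f (q⊗q)`.  Moreover, for
any smooth `ω`, setting `v' = e^{-ω} v`, the Lie derivative of `e^{2ω} q⊗q` along `v'`
equals `2 e^{ω} (L_v ω + f) (q⊗q)`; in particular if `L_v ω = -f` then
`L_{v'}(e^{2ω} q⊗q) = 0`. -/
theorem intrinsic_torsion_of_two_dim_carroll_structure
    {E : Type} [NormedAddCommGroup E] [NormedSpace ℝ E]
    (v : E → E) (q : E → E →L[ℝ] ℝ) (f : E → ℝ)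
    (hv : ContDiff ℝ (⊤ : ℕ∞) v) (hq : ContDiff ℝ (⊤ : ℕ∞) q) (hf : ContDiff ℝ (⊤ : ℕ∞) f)
    (hιq : ∀ p : E, q p (v p) = 0)
    (hιdq : ∀ (p : E) (w : E),
      fderiv ℝ (fun x => q x w) p (v p) - fderiv ℝ (fun x => q x (v p)) p w = f p * q p w) :
    (∀ (p u w : E),
      lieDerivBil v (fun x a b => q x a * q x b) p u w = 2 * f p * (q p u * q p w)) ∧
    (∀ ω : E → ℝ, ContDiff ℝ (⊤ : ℕ∞) ω →
      (∀ (p u w : E),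
        lieDerivBil (fun x => Real.exp (-ω x) • v x)
            (fun x a b => Real.exp (2 * ω x) * (q x a * q x b)) p u w
          = 2 * Real.exp (ω p) * (fderiv ℝ ω p (v p) + f p) * (q p u * q p w)) ∧
      ((∀ p : E, fderiv ℝ ω p (v p) = - f p) →
        ∀ (p u w : E),
          lieDerivBil (fun x => Real.exp (-ω x) • v x)
            (fun x a b => Real.exp (2 * ω x) * (q x a * q x b)) p u w = 0)) := by
  have hvd : Differentiable ℝ v := hv.differentiable (by simp)
  have hqd : Differentiable ℝ q := hq.differentiable (by simp)
  have part1 : ∀ (p u w : E),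
      lieDerivBil v (fun x a b => q x a * q x b) p u w = 2 * f p * (q p u * q p w) :=
    lieDerivBil_key v q f hvd hqd hιq hιdq
  refine ⟨part1, ?_⟩
  intro ω hω
  have hωd : Differentiable ℝ ω := hω.differentiable (by simp)
  -- the rescaled data
  set v' : E → E := fun x => Real.exp (-ω x) • v x with hv'def
  set q' : E → E →L[ℝ] ℝ := fun x => Real.exp (ω x) • q x with hq'def
  set f' : E → ℝ := fun x => Real.exp (-ω x) * (fderiv ℝ ω x (v x) + f x) with hf'def
  have hv' : Differentiable ℝ v' := (hωd.neg.exp).smul hvd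
  have hq' : Differentiable ℝ q' := (hωd.exp).smul hqd
  have hA : ∀ (x : E) (a : E), DifferentiableAt ℝ (fun y => q y a) x := fun x a =>
    (hqd x).clm_apply (differentiableAt_const a)
  have hιq' : ∀ p : E, q' p (v' p) = 0 := by
    intro p
    simp [hq'def, hv'def, hιq p]
  have hιdq' : ∀ (p : E) (w : E),
      fderiv ℝ (fun x => q' x w) p (v' p) - fderiv ℝ (fun x => q' x (v' p)) p w
        = f' p * q' p w := by
    intro p w
    have hexp : DifferentiableAt ℝ (fun x => Real.exp (ω x)) p := (hωd p).exp
    -- first term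
    have e1 : (fun x => q' x w) = fun x => Real.exp (ω x) * q x w := by
      funext x; simp [hq'def]
    have d1 : fderiv ℝ (fun x => q' x w) p
        = Real.exp (ω p) • fderiv ℝ (fun y => q y w) p
          + q p w • (Real.exp (ω p) • fderiv ℝ ω p) := by
      rw [e1, fderiv_fun_mul hexp (hA p w), fderiv_exp (hωd p)]
    -- second term : q' x (v' p) = exp(-ω p) * (exp(ω x) * q x (v p))
    have e2 : (fun x => q' x (v' p))
        = fun x => Real.exp (-ω p) * (Real.exp (ω x) * q x (v p)) := by
      funext x
      simp [hq'def, hv'def, map_smul, smul_eq_mul]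
    have d2 : fderiv ℝ (fun x => q' x (v' p)) p
        = Real.exp (-ω p) • (Real.exp (ω p) • fderiv ℝ (fun y => q y (v p)) p
          + q p (v p) • (Real.exp (ω p) • fderiv ℝ ω p)) := by
      rw [e2, fderiv_const_mul (hexp.fun_mul (hA p (v p))),
        fderiv_fun_mul hexp (hA p (v p)), fderiv_exp (hωd p)]
    rw [d1, d2]
    simp only [hιq p, zero_smul, add_zero, ContinuousLinearMap.add_apply,
      ContinuousLinearMap.smul_apply, smul_eq_mul, hv'def, hq'def, hf'def, map_smul]
    have h2 := hιdq p w
    linear_combination Real.exp (-ω p) * Real.exp (ω p) * h2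
  have key' := lieDerivBil_key v' q' f' hv' hq' hιq' hιdq'
  have hfun : (fun x a b => Real.exp (2 * ω x) * (q x a * q x b))
      = fun x a b => q' x a * q' x b := by
    funext x a b
    simp only [hq'def, ContinuousLinearMap.smul_apply, smul_eq_mul, two_mul, Real.exp_add]
    ring
  have main : ∀ (p u w : E),
      lieDerivBil (fun x => Real.exp (-ω x) • v x)
          (fun x a b => Real.exp (2 * ω x) * (q x a * q x b)) p u w
        = 2 * Real.exp (ω p) * (fderiv ℝ ω p (v p) + f p) * (q p u * q p w) := by
    intro p u w
    rw [hfun]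
    have := key' p u w
    rw [this]
    simp only [hf'def, hq'def, ContinuousLinearMap.smul_apply, smul_eq_mul, Real.exp_neg]
    have hne := Real.exp_ne_zero (ω p)
    field_simp
  refine ⟨main, ?_⟩
  intro h0 p u w
  rw [main p u w, h0 p]
  ring
end
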